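/- Let (X,d) be a locally compact, incomplete, rectifiably connected metric space, let a ≥ 1, and let γ be an a-cone arc in X joining x to x0. Then for each y on γ and each z on the subarc γ[y,x0] (i.e. z lies between y and x0 along γ), one has k(y,z) ≤ ℓ_k(γ[y,z]) ≤ 3a·log(1 + a·d(z)/d(y)) ≤ 3a·k(y,z) + 3a·log(3a), where ℓ_k denotes length with respect to the quasihyperbolic metric k. -/

import Mathlib

open Set Metric MeasureTheory

noncomputable section

/-- The metric boundary of `X`: the complement of (the image of) `X` in its
metric completion `X̄`, i.e. `∂X = X̄ \ X`. -/
def mBoundary (X : Type*) [MetricSpace X] : Set (UniformSpace.Completion X) :=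
  (Set.range ((↑) : X → UniformSpace.Completion X))ᶜ

/-- `dB x` is the distance `d(x)` from `x` to the metric boundary `∂X`. -/
def dB {X : Type*} [MetricSpace X] (x : X) : ℝ :=
  Metric.infDist (x : UniformSpace.Completion X) (mBoundary X)

/-- `X` is rectifiably connected: any two points are joined by a curve of
finite length. -/
def RectifiablyConnected (X : Type*) [MetricSpace X] : Prop :=
  ∀ x y : X, ∃ (L : ℝ) (γ : ℝ → X), 0 ≤ L ∧ ContinuousOn γ (Set.Icc 0 L) ∧
    γ 0 = x ∧ γ L = y ∧ eVariationOn γ (Set.Icc 0 L) ≠ ⊤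

/-- `γ` is parametrized by arclength (w.r.t. `d`) on `[0, L]`: the length of
every subarc equals the length of its parameter interval. -/
def UnitSpeedOn {X : Type*} [MetricSpace X] (γ : ℝ → X) (L : ℝ) : Prop :=
  ∀ s ∈ Set.Icc (0:ℝ) L, ∀ t ∈ Set.Icc (0:ℝ) L, s ≤ t →
    eVariationOn γ (Set.Icc s t) = ENNReal.ofReal (t - s)

/-- The quasihyperbolic distance `k(x,y) = inf ∫_γ |dz| / d(z)`, the infimum
being over rectifiable curves joining `x` to `y`, which may be taken
parametrized by arclength (so the line integral is `∫ 1/d(γ(t)) dt`). -/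
def qhDist {X : Type*} [MetricSpace X] (x y : X) : ℝ :=
  sInf { r : ℝ | ∃ (L : ℝ) (γ : ℝ → X), 0 ≤ L ∧ UnitSpeedOn γ L ∧
    γ 0 = x ∧ γ L = y ∧ r = ∫ t in (0:ℝ)..L, 1 / dB (γ t) }

/-- The quasihyperbolic length `ℓ_k` of the subarc `γ[γ(s), γ(t)]` of an
arclength-parametrized curve `γ`. -/
def qhLen {X : Type*} [MetricSpace X] (γ : ℝ → X) (s t : ℝ) : ℝ :=
  ∫ u in s..t, 1 / dB (γ u)

/-- `γ : [0,T] → X` is a quasihyperbolic geodesic, i.e. a geodesic of `(X,k)`. -/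
def IsQHGeodesic {X : Type*} [MetricSpace X] (γ : ℝ → X) (T : ℝ) : Prop :=
  0 ≤ T ∧ ∀ s ∈ Set.Icc (0:ℝ) T, ∀ t ∈ Set.Icc (0:ℝ) T, qhDist (γ s) (γ t) = |s - t|

/-- The `a`-cone arc condition for a curve `γ : [0,L] → X`:
`ℓ(γ[γ(0), γ(t)]) ≤ a · d(γ(t))` for all `t`. -/
def IsConeArcOn {X : Type*} [MetricSpace X] (a : ℝ) (γ : ℝ → X) (L : ℝ) : Prop :=
  ∀ t ∈ Set.Icc (0:ℝ) L, eVariationOn γ (Set.Icc 0 t) ≤ ENNReal.ofReal (a * dB (γ t))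

/-- `X` is `a`-John with center `x0`: every point is joined to `x0` by an
`a`-cone arc. -/
def IsJohn (X : Type*) [MetricSpace X] (a : ℝ) (x0 : X) : Prop :=
  ∀ x : X, ∃ (L : ℝ) (γ : ℝ → X), 0 ≤ L ∧ ContinuousOn γ (Set.Icc 0 L) ∧
    Set.InjOn γ (Set.Icc 0 L) ∧ γ 0 = x ∧ γ L = x0 ∧ IsConeArcOn a γ L

/-- `X` is quasihyperbolic `a`-John with center `x0`: every quasihyperbolic
geodesic joining a point of `X` to `x0` is an `a`-cone arc. -/
def IsQHJohn {X : Type*} [MetricSpace X] (a : ℝ) (x0 : X) : Prop :=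
  ∀ (γ : ℝ → X) (T : ℝ), IsQHGeodesic γ T → γ T = x0 → IsConeArcOn a γ T

/-- The criterion of Theorem 1: for every quasihyperbolic geodesic `α` ending
at `x0` and points `y₁ = α(s)`, `y₂ = α(t)` on `α` such that
`d(u) ≤ 2 min (d y₁) (d y₂)` on the subarc `α[y₁,y₂]`, one has `k(y₁,y₂) ≤ A`. -/
def QHJohnCriterion {X : Type*} [MetricSpace X] (x0 : X) (A : ℝ) : Prop :=
  ∀ (α : ℝ → X) (T : ℝ), IsQHGeodesic α T → α T = x0 →
    ∀ s ∈ Set.Icc (0:ℝ) T, ∀ t ∈ Set.Icc (0:ℝ) T, s ≤ t →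
      (∀ u ∈ Set.Icc s t, dB (α u) ≤ 2 * min (dB (α s)) (dB (α t))) →
      qhDist (α s) (α t) ≤ A

/-- `X` is `c`-uniform: any `x, y` are joined by a curve that is `c`-quasiconvex
and satisfies the double cone condition. -/
def IsUniform (X : Type*) [MetricSpace X] (c : ℝ) : Prop :=
  ∀ x y : X, ∃ (L : ℝ) (γ : ℝ → X), 0 ≤ L ∧ ContinuousOn γ (Set.Icc 0 L) ∧
    γ 0 = x ∧ γ L = y ∧
    eVariationOn γ (Set.Icc 0 L) ≤ ENNReal.ofReal (c * dist x y) ∧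
    ∀ t ∈ Set.Icc (0:ℝ) L,
      min (eVariationOn γ (Set.Icc 0 t)) (eVariationOn γ (Set.Icc t L)) ≤
        ENNReal.ofReal (c * dB (γ t))

/-- `(X, k)` is Gromov `δ`-hyperbolic: every side of every quasihyperbolic
geodesic triangle lies in the `δ`-neighbourhood (w.r.t. `k`) of the union of
the other two sides. -/
def QHGromovHyperbolic (X : Type*) [MetricSpace X] (δ : ℝ) : Prop :=
  ∀ (γ₁ γ₂ γ₃ : ℝ → X) (T₁ T₂ T₃ : ℝ),
    IsQHGeodesic γ₁ T₁ → IsQHGeodesic γ₂ T₂ → IsQHGeodesic γ₃ T₃ →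
    γ₂ 0 = γ₁ T₁ → γ₃ 0 = γ₁ 0 → γ₃ T₃ = γ₂ T₂ →
    ∀ s ∈ Set.Icc (0:ℝ) T₁, ∃ t : ℝ,
      (t ∈ Set.Icc (0:ℝ) T₂ ∧ qhDist (γ₁ s) (γ₂ t) ≤ δ) ∨
      (t ∈ Set.Icc (0:ℝ) T₃ ∧ qhDist (γ₁ s) (γ₃ t) ≤ δ)


section Aux

variable {X : Type*} [MetricSpace X]

lemma dB_nonneg' (x : X) : 0 ≤ dB x := Metric.infDist_nonneg

lemma dB_le_add' (x y : X) : dB x ≤ dB y + dist x y := by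
  have h := Metric.infDist_le_infDist_add_dist
    (x := (x : UniformSpace.Completion X)) (y := (y : UniformSpace.Completion X))
    (s := mBoundary X)
  rwa [UniformSpace.Completion.dist_eq] at h

lemma continuous_dB' : Continuous (dB : X → ℝ) :=
  (Metric.continuous_infDist_pt (mBoundary X)).comp (UniformSpace.Completion.continuous_coe X)

lemma isOpen_range_completion_coe' (X : Type*) [MetricSpace X] [LocallyCompactSpace X] :
    IsOpen (Set.range ((↑) : X → UniformSpace.Completion X)) := by
  rw [Metric.isOpen_iff]
  rintro _ ⟨x, rfl⟩
  obtain ⟨K, hK, hKn⟩ := exists_compact_mem_nhds x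
  obtain ⟨ε, hε, hball⟩ := Metric.mem_nhds_iff.1 hKn
  refine ⟨ε / 2, by positivity, ?_⟩
  have hC : IsCompact (Metric.closedBall x (ε / 2)) :=
    hK.of_isClosed_subset Metric.isClosed_closedBall
      ((Metric.closedBall_subset_ball (by linarith)).trans hball)
  have hCc : IsClosed (((↑) : X → UniformSpace.Completion X) '' Metric.closedBall x (ε / 2)) :=
    (hC.image UniformSpace.Completion.coe_isometry.continuous).isClosed
  intro z hz
  rw [Metric.mem_ball] at hz
  have hzc : z ∈ closure (((↑) : X → UniformSpace.Completion X) '' Metric.closedBall x (ε / 2)) := by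
    rw [Metric.mem_closure_iff]
    intro δ hδ
    have hz2 : z ∈ closure (Set.range ((↑) : X → UniformSpace.Completion X)) :=
      UniformSpace.Completion.denseRange_coe z
    rw [Metric.mem_closure_iff] at hz2
    obtain ⟨w, ⟨y, rfl⟩, hw⟩ := hz2 (min δ (ε / 2 - dist z (x : UniformSpace.Completion X)))
      (lt_min hδ (by linarith))
    refine ⟨(y : UniformSpace.Completion X), ⟨y, ?_, rfl⟩, hw.trans_le (min_le_left _ _)⟩
    have h1 : dist ((y : UniformSpace.Completion X)) (x : UniformSpace.Completion X) ≤
        dist (y : UniformSpace.Completion X) z + dist z (x : UniformSpace.Completion X) :=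
      dist_triangle _ _ _
    have h2 : dist (y : UniformSpace.Completion X) z <
        ε / 2 - dist z (x : UniformSpace.Completion X) :=
      (dist_comm (z) ((y : UniformSpace.Completion X)) ▸ hw).trans_le (min_le_right _ _)
    have := UniformSpace.Completion.dist_eq y x
    rw [Metric.mem_closedBall]
    linarith
  rw [hCc.closure_eq] at hzc
  exact Set.image_subset_range _ _ hzc

lemma dB_pos' {X : Type*} [MetricSpace X] [LocallyCompactSpace X]
    (hb : (mBoundary X).Nonempty) (x : X) : 0 < dB x := by
  have hcl : IsClosed (mBoundary X) := (isOpen_range_completion_coe' X).isClosed_compl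
  exact (hcl.notMem_iff_infDist_pos hb).1 (fun h => h (Set.mem_range_self x))

lemma unit_dist_le' {γ : ℝ → X} {L : ℝ} (hunit : UnitSpeedOn γ L) {u v : ℝ}
    (hu : u ∈ Set.Icc 0 L) (hv : v ∈ Set.Icc 0 L) (huv : u ≤ v) :
    dist (γ u) (γ v) ≤ v - u := by
  have h := eVariationOn.edist_le γ (x := u) (y := v)
    (Set.mem_Icc.2 ⟨le_rfl, huv⟩) (Set.mem_Icc.2 ⟨huv, le_rfl⟩)
  rw [hunit u hu v hv huv, edist_dist] at h
  exact (ENNReal.ofReal_le_ofReal_iff (by linarith)).1 h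

lemma unitSpeed_continuousOn' {γ : ℝ → X} {L : ℝ} (hunit : UnitSpeedOn γ L) :
    ContinuousOn γ (Set.Icc 0 L) := by
  refine (LipschitzOnWith.mk_one ?_).continuousOn
  intro u hu v hv
  rw [Real.dist_eq]
  rcases le_total u v with h | h
  · exact (unit_dist_le' hunit hu hv h).trans
      ((le_abs_self _).trans (abs_sub_comm v u).le)
  · rw [dist_comm]
    exact (unit_dist_le' hunit hv hu h).trans (le_abs_self _)

lemma cone_param_le' {γ : ℝ → X} {L a : ℝ} (ha : 1 ≤ a) (hL : 0 ≤ L)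
    (hunit : UnitSpeedOn γ L) (hcone : IsConeArcOn a γ L) {u : ℝ}
    (hu : u ∈ Set.Icc 0 L) : u ≤ a * dB (γ u) := by
  have h := hcone u hu
  rw [hunit 0 (Set.mem_Icc.2 ⟨le_rfl, hL⟩) u hu hu.1] at h
  have := (ENNReal.ofReal_le_ofReal_iff
    (mul_nonneg (by linarith) (dB_nonneg' (γ u)))).1 h
  linarith

lemma integral_inv_shift' {c s t : ℝ} (hc : 0 < c) (hst : s ≤ t) :
    ∫ u in s..t, 1 / (c + (u - s)) = Real.log ((c + (t - s)) / c) := by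
  have h1 : ∀ u : ℝ, 1 / (c + (u - s)) = (fun x : ℝ => 1 / x) (u + (c - s)) := by
    intro u; simp only; congr 1; ring
  calc ∫ u in s..t, 1 / (c + (u - s))
      = ∫ u in s..t, (fun x : ℝ => 1 / x) (u + (c - s)) := by simp only [h1]
    _ = ∫ x in s + (c - s)..t + (c - s), 1 / x :=
        intervalIntegral.integral_comp_add_right _ _
    _ = Real.log ((t + (c - s)) / (s + (c - s))) := integral_one_div (by
        rw [Set.uIcc_of_le (by linarith)]
        rintro ⟨h0, -⟩
        linarith)
    _ = Real.log ((c + (t - s)) / c) := by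
        rw [show t + (c - s) = c + (t - s) by ring, show s + (c - s) = c by ring]

lemma log_le_qh_integral' {X : Type*} [MetricSpace X] [LocallyCompactSpace X]
    (hb : (mBoundary X).Nonempty) {δ : ℝ → X} {M : ℝ} (hM : 0 ≤ M)
    (hu : UnitSpeedOn δ M) :
    Real.log (dB (δ M) / dB (δ 0)) ≤ ∫ u in (0:ℝ)..M, 1 / dB (δ u) := by
  have hd0 : 0 < dB (δ 0) := dB_pos' hb _
  have hdM : 0 < dB (δ M) := dB_pos' hb _
  have hptd : ∀ u ∈ Set.Icc (0:ℝ) M, dB (δ u) ≤ dB (δ 0) + (u - 0) := by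
    intro u hu'
    have h1 := dB_le_add' (δ u) (δ 0)
    have h2 : dist (δ 0) (δ u) ≤ u - 0 :=
      unit_dist_le' hu (Set.mem_Icc.2 ⟨le_rfl, hM⟩) hu' hu'.1
    rw [dist_comm] at h2
    linarith
  have hcont : ContinuousOn (fun u => dB (δ u)) (Set.Icc 0 M) :=
    continuous_dB'.comp_continuousOn (unitSpeed_continuousOn' hu)
  have hint2 : IntervalIntegrable (fun u => 1 / dB (δ u)) volume 0 M :=
    (continuousOn_const.div hcont
      (fun u hu' => (dB_pos' hb (δ u)).ne')).intervalIntegrable_of_Icc hM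
  have hint1 : IntervalIntegrable (fun u => 1 / (dB (δ 0) + (u - 0))) volume 0 M := by
    refine (continuousOn_const.div (by fun_prop) ?_).intervalIntegrable_of_Icc hM
    intro u hu'
    have := hu'.1
    exact ne_of_gt (by linarith)
  calc Real.log (dB (δ M) / dB (δ 0))
      ≤ Real.log ((dB (δ 0) + (M - 0)) / dB (δ 0)) := by
        have := hptd M (Set.mem_Icc.2 ⟨hM, le_rfl⟩)
        gcongr
    _ = ∫ u in (0:ℝ)..M, 1 / (dB (δ 0) + (u - 0)) := (integral_inv_shift' hd0 hM).symm
    _ ≤ ∫ u in (0:ℝ)..M, 1 / dB (δ u) := by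
        refine intervalIntegral.integral_mono_on hM hint1 hint2 ?_
        intro u hu'
        exact one_div_le_one_div_of_le (dB_pos' hb (δ u)) (hptd u hu')

end Aux

/-- **Lemma 3.3 (STATEMENT 6).** If `γ` is an `a`-cone arc in `X` joining `x`
to `x0` (parametrized by arclength), then for each `y = γ(s)` on `γ` and each
`z = γ(t)` on the subarc `γ[y, x0]` (i.e. `s ≤ t`):
`k(y,z) ≤ ℓ_k(γ[y,z]) ≤ 3a·log(1 + a·d(z)/d(y)) ≤ 3a·k(y,z) + 3a·log(3a)`. -/
theorem coneArc_qhLen_estimates {X : Type*} [MetricSpace X] [LocallyCompactSpace X]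
    (hb : (mBoundary X).Nonempty) (hrc : RectifiablyConnected X)
    (a : ℝ) (ha : 1 ≤ a) (x x0 : X) (γ : ℝ → X) (L : ℝ) (hL : 0 ≤ L)
    (hcont : ContinuousOn γ (Set.Icc 0 L)) (hinj : Set.InjOn γ (Set.Icc 0 L))
    (hunit : UnitSpeedOn γ L) (h0 : γ 0 = x) (h1 : γ L = x0)
    (hcone : IsConeArcOn a γ L) :
    ∀ s ∈ Set.Icc (0:ℝ) L, ∀ t ∈ Set.Icc (0:ℝ) L, s ≤ t →
      qhDist (γ s) (γ t) ≤ qhLen γ s t ∧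
      qhLen γ s t ≤ 3 * a * Real.log (1 + a * dB (γ t) / dB (γ s)) ∧
      3 * a * Real.log (1 + a * dB (γ t) / dB (γ s)) ≤
        3 * a * qhDist (γ s) (γ t) + 3 * a * Real.log (3 * a) := by
  intro s hs t ht hst
  have hds : 0 < dB (γ s) := dB_pos' hb _
  have hdt : 0 < dB (γ t) := dB_pos' hb _
  have hsub : Set.Icc s t ⊆ Set.Icc 0 L := Set.Icc_subset_Icc hs.1 ht.2
  have hta : t ≤ a * dB (γ t) := cone_param_le' ha hL hunit hcone ht
  set M := t - s with hM_def
  have hM : 0 ≤ M := by simp only [hM_def]; linarith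
  -- the shifted subcurve is a competitor for `qhDist (γ s) (γ t)`
  have hδunit : UnitSpeedOn (fun u => γ (u + s)) M := by
    intro s' hs' t' ht' h'
    have hmono : MonotoneOn (fun u : ℝ => u + s) (Set.Icc s' t') :=
      fun u _ v _ huv => add_le_add_left huv s
    have h := eVariationOn.comp_eq_of_monotoneOn γ _ hmono
    rw [Set.image_add_const_Icc] at h
    have hsM : s' ≤ M := le_trans h' ht'.2
    have htM : t' + s ≤ t := by
      have := ht'.2; simp only [hM_def] at this ⊢; linarith
    have h2 := hunit (s' + s) ⟨by linarith [hs'.1, hs.1], le_trans (by linarith [h']) (le_trans htM ht.2)⟩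
      (t' + s) ⟨by linarith [hs'.1, ht'.1, hs.1, h'], le_trans htM ht.2⟩ (by linarith)
    calc eVariationOn (fun u => γ (u + s)) (Set.Icc s' t')
        = eVariationOn γ (Set.Icc (s' + s) (t' + s)) := h
      _ = ENNReal.ofReal (t' + s - (s' + s)) := h2
      _ = ENNReal.ofReal (t' - s') := by ring_nf
  have hintrep : (∫ u in (0:ℝ)..M, 1 / dB (γ (u + s))) = qhLen γ s t := by
    have h := intervalIntegral.integral_comp_add_right
      (a := (0:ℝ)) (b := M) (fun v => 1 / dB (γ v)) s
    rw [zero_add, sub_add_cancel] at h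
    exact h
  have hmem : qhLen γ s t ∈ {r : ℝ | ∃ (L' : ℝ) (δ : ℝ → X), 0 ≤ L' ∧ UnitSpeedOn δ L' ∧
      δ 0 = γ s ∧ δ L' = γ t ∧ r = ∫ u in (0:ℝ)..L', 1 / dB (δ u)} :=
    ⟨M, fun u => γ (u + s), hM, hδunit, by simp only [zero_add],
      by simp only [hM_def, sub_add_cancel], hintrep.symm⟩
  have hbdd : BddBelow {r : ℝ | ∃ (L' : ℝ) (δ : ℝ → X), 0 ≤ L' ∧ UnitSpeedOn δ L' ∧
      δ 0 = γ s ∧ δ L' = γ t ∧ r = ∫ u in (0:ℝ)..L', 1 / dB (δ u)} := by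
    refine ⟨0, ?_⟩
    rintro r ⟨M', δ, hM', -, -, -, rfl⟩
    exact intervalIntegral.integral_nonneg hM' fun u _ => one_div_nonneg.2 (dB_nonneg' _)
  have hfirst : qhDist (γ s) (γ t) ≤ qhLen γ s t := csInf_le hbdd hmem
  -- the middle estimate
  have hcontdB : ContinuousOn (fun u => dB (γ u)) (Set.Icc s t) :=
    continuous_dB'.comp_continuousOn (hcont.mono hsub)
  have hpt : ∀ u ∈ Set.Icc s t,
      1 / dB (γ u) ≤ (2 * a + 1) * (1 / (dB (γ s) + (u - s))) := by
    intro u hu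
    have huL := hsub hu
    have hdu : 0 < dB (γ u) := dB_pos' hb _
    have b1 : dB (γ s) ≤ dB (γ u) + (u - s) := by
      have h2 : dist (γ s) (γ u) ≤ u - s := unit_dist_le' hunit hs huL hu.1
      have h3 := dB_le_add' (γ s) (γ u)
      linarith
    have b2 : u - s ≤ a * dB (γ u) := by
      have := cone_param_le' ha hL hunit hcone huL
      linarith [hs.1]
    have hsu : s ≤ u := hu.1
    rw [mul_one_div, div_le_div_iff₀ hdu (by linarith)]
    nlinarith
  have hint1 : IntervalIntegrable (fun u => 1 / dB (γ u)) volume s t :=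
    (continuousOn_const.div hcontdB
      (fun u _ => (dB_pos' hb _).ne')).intervalIntegrable_of_Icc hst
  have hint2 : IntervalIntegrable
      (fun u => (2 * a + 1) * (1 / (dB (γ s) + (u - s)))) volume s t := by
    refine (continuousOn_const.mul
      (continuousOn_const.div (by fun_prop) ?_)).intervalIntegrable_of_Icc hst
    intro u hu
    exact ne_of_gt (by linarith [hu.1])
  have hmid : qhLen γ s t ≤ (2 * a + 1) * Real.log ((dB (γ s) + (t - s)) / dB (γ s)) := by
    calc qhLen γ s t ≤ ∫ u in s..t, (2 * a + 1) * (1 / (dB (γ s) + (u - s))) :=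
          intervalIntegral.integral_mono_on hst hint1 hint2 hpt
      _ = (2 * a + 1) * ∫ u in s..t, 1 / (dB (γ s) + (u - s)) :=
          intervalIntegral.integral_const_mul _ _
      _ = (2 * a + 1) * Real.log ((dB (γ s) + (t - s)) / dB (γ s)) := by
          rw [integral_inv_shift' hds hst]
  have harg : (dB (γ s) + (t - s)) / dB (γ s) = 1 + (t - s) / dB (γ s) := by
    field_simp
  have hratio_nonneg : (0:ℝ) ≤ a * dB (γ t) / dB (γ s) := by positivity
  have h1pos : (0:ℝ) < 1 + (t - s) / dB (γ s) := by
    have h0 : 0 ≤ (t - s) / dB (γ s) := div_nonneg (by linarith) hds.le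
    linarith
  have hmono : Real.log (1 + (t - s) / dB (γ s)) ≤
      Real.log (1 + a * dB (γ t) / dB (γ s)) := by
    have h2 : (t - s) / dB (γ s) ≤ a * dB (γ t) / dB (γ s) :=
      (div_le_div_iff_of_pos_right hds).2 (by linarith [hs.1])
    exact Real.log_le_log h1pos (by linarith)
  have hlog1_nonneg : 0 ≤ Real.log (1 + (t - s) / dB (γ s)) := by
    apply Real.log_nonneg
    have h0 : 0 ≤ (t - s) / dB (γ s) := div_nonneg (by linarith) hds.le
    linarith
  have hsecond : qhLen γ s t ≤ 3 * a * Real.log (1 + a * dB (γ t) / dB (γ s)) := by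
    calc qhLen γ s t ≤ (2 * a + 1) * Real.log ((dB (γ s) + (t - s)) / dB (γ s)) := hmid
      _ = (2 * a + 1) * Real.log (1 + (t - s) / dB (γ s)) := by rw [harg]
      _ ≤ 3 * a * Real.log (1 + a * dB (γ t) / dB (γ s)) :=
          mul_le_mul (by linarith) hmono hlog1_nonneg (by linarith)
  -- the lower bound for qhDist
  have hklow : Real.log (dB (γ t) / dB (γ s)) ≤ qhDist (γ s) (γ t) := by
    apply le_csInf ⟨_, hmem⟩
    rintro r ⟨M', δ, hM', hδu', hδ0, hδM', rfl⟩
    have h := log_le_qh_integral' hb hM' hδu'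
    rwa [hδ0, hδM'] at h
  have hds_le : dB (γ s) ≤ 2 * a * dB (γ t) := by
    have h2 : dist (γ s) (γ t) ≤ t - s := unit_dist_le' hunit hs ht hst
    have h3 := dB_le_add' (γ s) (γ t)
    nlinarith [hs.1, hta, hdt.le, ha]
  have hfinal : Real.log (1 + a * dB (γ t) / dB (γ s)) ≤
      qhDist (γ s) (γ t) + Real.log (3 * a) := by
    have hineq : 1 + a * dB (γ t) / dB (γ s) ≤ dB (γ t) / dB (γ s) * (3 * a) := by
      have hratio : (1:ℝ) ≤ 2 * a * dB (γ t) / dB (γ s) := (one_le_div hds).2 hds_le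
      have e : 2 * a * dB (γ t) / dB (γ s) + a * dB (γ t) / dB (γ s) =
          dB (γ t) / dB (γ s) * (3 * a) := by ring
      linarith
    have hl := Real.log_le_log (by linarith) hineq
    rw [Real.log_mul (ne_of_gt (div_pos hdt hds))
      (ne_of_gt (by linarith : (0:ℝ) < 3 * a))] at hl
    linarith
  refine ⟨hfirst, hsecond, ?_⟩
  have h3a : (0:ℝ) ≤ 3 * a := by linarith
  have hm := mul_le_mul_of_nonneg_left hfinal h3a
  have e2 : 3 * a * (qhDist (γ s) (γ t) + Real.log (3 * a)) =
      3 * a * qhDist (γ s) (γ t) + 3 * a * Real.log (3 * a) := by ring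
  linarith
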